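/- For every nonnegative integer n, the set of pairs (λ, μ) of partitions with o(λ) + o(μ) = n is finite and its cardinality equals p₄(n), the number of quadruples of partitions whose sizes sum to n. -/

import Mathlib

/-- A partition: a weakly decreasing sequence of nonnegative integers with
finitely many nonzero terms. -/
structure CPartition where
  parts : ℕ → ℕ
  antitone : Antitone parts
  finite_support : Set.Finite {i : ℕ | parts i ≠ 0}

/-- The conjugate partition: `λ'_j = #{i : λ_i ≥ j}` (columns indexed from 1). -/
noncomputable def CPartition.conj (lam : CPartition) (j : ℕ) : ℕ :=
  Nat.card {i : ℕ | j ≤ lam.parts i}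

/-- `o(λ) = Σ_{j odd} λ'_j`, the number of boxes of `λ` in odd-indexed columns. -/
noncomputable def CPartition.oddCols (lam : CPartition) : ℕ :=
  ∑' j : ℕ, if Odd j then lam.conj j else 0

/-- `|λ| = Σᵢ λᵢ`, the size of a partition. -/
noncomputable def CPartition.size (lam : CPartition) : ℕ :=
  ∑' i : ℕ, lam.parts i

/-!
Conjugation turns `o(λ)` into the sum `λ'₀ + λ'₂ + λ'₄ + ⋯` of the even-indexed parts of `λ'`
(indexed from 0). Encoding a partition `ν` by its difference sequence `f k = ν k - ν (k + 1)`
gives `|ν| = ∑ (k + 1) f k` and `∑ₜ ν (2t) = ∑ (k / 2 + 1) f k`. The entries `f (2k)` and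
`f (2k + 1)` both carry weight `k + 1`, so splitting `f` by parity of the index yields a bijection
`λ ↦ (γ, δ)` with `o(λ) = |γ| + |δ|`; applied to both members of a pair it matches the pairs with
`o(λ) + o(μ) = n` with the quadruples of total size `n`.
-/

theorem Nat.eq_Iio_ncard_of_isLowerSet {s : Set ℕ} (hs : IsLowerSet s) (hfin : s.Finite) :
    s = Set.Iio s.ncard := by
  ext i
  rw [Set.mem_Iio]
  constructor
  · intro hi
    have := Set.ncard_le_ncard (fun k hk => hs (Set.mem_Iic.mp hk) hi) hfin
    rwa [Set.ncard_Iic_nat, Nat.add_one_le_iff] at this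
  · intro hi
    by_contra hni
    have hsub : s ⊆ Set.Iio i := fun k hk => Set.mem_Iio.mpr <|
      lt_of_not_ge fun hik => hni (hs hik hk)
    have := Set.ncard_le_ncard hsub (Set.finite_Iio i)
    rw [Set.ncard_Iio_nat] at this
    omega

theorem Nat.eq_of_eq_add_succ {g p q : ℕ → ℕ} (hp : ∀ i, p i = g i + p (i + 1))
    (hq : ∀ i, q i = g i + q (i + 1)) (N : ℕ) (hN : ∀ i, N ≤ i → p i = q i) : p = q := by
  suffices h : ∀ m i, N ≤ i + m → p i = q i from funext fun i => h N i (Nat.le_add_left N i)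
  intro m
  induction m with
  | zero => exact hN
  | succ m ih =>
    intro i hi
    rw [hp, hq, ih (i + 1) (by omega)]

noncomputable def Finsupp.tailSum (f : ℕ →₀ ℕ) (i : ℕ) : ℕ :=
  f.sum fun k m => if i ≤ k then m else 0

theorem Finsupp.tailSum_eq_add (f : ℕ →₀ ℕ) (i : ℕ) :
    f.tailSum i = f i + f.tailSum (i + 1) := by
  have hsplit : ∀ k m : ℕ, (if i ≤ k then m else 0) =
      (if k = i then m else 0) + (if i + 1 ≤ k then m else 0) := by
    intro k m; split_ifs <;> omega
  simp only [tailSum, hsplit, Finsupp.sum_add, Finsupp.sum_ite_self_eq']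

theorem Nat.hasSum_ite_mul_le (d k m : ℕ) (hd : 0 < d) :
    HasSum (fun t => if d * t ≤ k then m else 0) (m • (k / d + 1)) := by
  have hmem : ∀ t, t ∈ Finset.range (k / d + 1) ↔ d * t ≤ k := fun t => by
    rw [Finset.mem_range, Nat.lt_add_one_iff, Nat.le_div_iff_mul_le hd, mul_comm]
  have hsum : HasSum (fun t => if d * t ≤ k then m else 0)
      (∑ t ∈ Finset.range (k / d + 1), if d * t ≤ k then m else 0) :=
    hasSum_sum_of_ne_finset_zero fun t ht => if_neg ((hmem t).not.mp ht)
  rwa [Finset.sum_congr rfl fun t ht => if_pos ((hmem t).mp ht), Finset.sum_const,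
    Finset.card_range, smul_eq_mul, mul_comm (k / d + 1), ← smul_eq_mul] at hsum

theorem Finsupp.tsum_tailSum_mul (f : ℕ →₀ ℕ) (d : ℕ) (hd : 0 < d) :
    ∑' t, f.tailSum (d * t) = Finsupp.weight (fun k => k / d + 1) f := by
  rw [Finsupp.weight_apply]
  exact (hasSum_sum fun k _ => Nat.hasSum_ite_mul_le d k (f k) hd).tsum_eq

/-- `evenOddEquiv f = (fun k => f (2 * k), fun k => f (2 * k + 1))`. -/
noncomputable def Finsupp.evenOddEquiv {M : Type*} [AddCommMonoid M] :
    (ℕ →₀ M) ≃+ (ℕ →₀ M) × (ℕ →₀ M) :=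
  (Finsupp.domCongr Equiv.natSumNatEquivNat.symm).trans Finsupp.sumFinsuppAddEquivProdFinsupp

theorem Finsupp.weight_eq_weight_evenOddEquiv {M : Type*} [AddCommMonoid M] (w : ℕ → M)
    (f : ℕ →₀ ℕ) :
    weight w f = weight (fun k => w (2 * k)) (evenOddEquiv f).1 +
      weight (fun k => w (2 * k + 1)) (evenOddEquiv f).2 := by
  induction f using Finsupp.induction_linear with
  | zero => simp
  | add f g hf hg => simp only [map_add, Prod.fst_add, Prod.snd_add, hf, hg]; abel
  | single a b =>
    obtain ⟨k, rfl | rfl⟩ := Nat.even_or_odd' a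
    · simp [evenOddEquiv, weight_single]
    · simp [evenOddEquiv, weight_single]

theorem Finsupp.finite_setOf_weight_add_one_le (n : ℕ) :
    {f : ℕ →₀ ℕ | weight (· + 1) f ≤ n}.Finite := by
  refine (Set.finite_Iic (Finsupp.indicator (Finset.range n) fun _ _ => n)).subset fun f hf => ?_
  intro k
  rw [Finsupp.indicator_apply]
  by_cases hk : f k = 0
  · simp [hk]
  · have hkn : k + 1 ≤ n := (le_weight_of_ne_zero' (· + 1) hk).trans hf
    rw [dif_pos (Finset.mem_range.mpr hkn)]
    exact (le_weight _ k.succ_ne_zero f).trans hf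

namespace CPartition

@[ext]
theorem ext {lam mu : CPartition} (h : lam.parts = mu.parts) : lam = mu := by
  cases lam; cases mu; simpa using h

theorem lt_conj_add_one_iff (lam : CPartition) (i j : ℕ) :
    i < lam.conj (j + 1) ↔ j < lam.parts i := by
  have hlower : IsLowerSet {i : ℕ | j < lam.parts i} :=
    fun a b hab ha => lt_of_lt_of_le ha (lam.antitone hab)
  have hfin : {i : ℕ | j < lam.parts i}.Finite :=
    lam.finite_support.subset fun i hi => Nat.ne_zero_of_lt hi
  rw [conj, Nat.card_coe_set_eq]
  exact (Set.ext_iff.mp (Nat.eq_Iio_ncard_of_isLowerSet hlower hfin) i).symm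

noncomputable def transpose (lam : CPartition) : CPartition where
  parts j := lam.conj (j + 1)
  antitone j j' hjj' := le_of_forall_lt fun i hi => by
    rw [lt_conj_add_one_iff] at hi ⊢
    exact lt_of_le_of_lt hjj' hi
  finite_support := (Set.finite_Iio (lam.parts 0)).subset fun j hj => by
    rw [Set.mem_Iio, ← lt_conj_add_one_iff, Nat.pos_iff_ne_zero]
    exact hj

theorem lt_transpose_parts_iff (lam : CPartition) (i j : ℕ) :
    i < lam.transpose.parts j ↔ j < lam.parts i :=
  lam.lt_conj_add_one_iff i j

theorem transpose_transpose (lam : CPartition) : lam.transpose.transpose = lam :=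
  CPartition.ext <| funext fun i => eq_of_forall_lt_iff fun j => by
    rw [lt_transpose_parts_iff, lt_transpose_parts_iff]

theorem oddCols_eq_tsum_transpose_parts (lam : CPartition) :
    lam.oddCols = ∑' t, lam.transpose.parts (2 * t) := by
  have hinj : Function.Injective fun t : ℕ => 2 * t + 1 := fun a b h => by simp only at h; omega
  rw [oddCols, ← hinj.tsum_eq]
  · congr 1
    funext t
    rw [if_pos (odd_two_mul_add_one t)]
    rfl
  · intro j hj
    obtain ⟨t, rfl⟩ : Odd j := by_contra fun h => hj (if_neg h)
    exact ⟨t, rfl⟩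

theorem exists_parts_eq_zero (lam : CPartition) : ∃ N, ∀ i, N ≤ i → lam.parts i = 0 := by
  obtain ⟨N, hN⟩ := lam.finite_support.bddAbove
  exact ⟨N + 1, fun i hi => by_contra fun h => absurd (hN h) (by omega)⟩

noncomputable def ofFinsupp (f : ℕ →₀ ℕ) : CPartition where
  parts := f.tailSum
  antitone := antitone_nat_of_succ_le fun i => by rw [f.tailSum_eq_add i]; omega
  finite_support := (Set.finite_Iic (f.support.sup id)).subset fun i hi => by
    obtain ⟨k, hk, hik⟩ := Finset.exists_ne_zero_of_sum_ne_zero hi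
    exact (of_not_not fun h => hik (if_neg h)).trans (Finset.le_sup (f := id) hk)

noncomputable def toFinsupp (lam : CPartition) : ℕ →₀ ℕ :=
  Finsupp.ofSupportFinite (fun k => lam.parts k - lam.parts (k + 1)) <|
    lam.finite_support.subset fun k hk h => hk (by simp [h])

theorem parts_eq_toFinsupp_add (lam : CPartition) (i : ℕ) :
    lam.parts i = lam.toFinsupp i + lam.parts (i + 1) := by
  have := lam.antitone (Nat.le_add_right i 1)
  simp only [toFinsupp, Finsupp.ofSupportFinite_coe]
  omega

theorem ofFinsupp_toFinsupp (lam : CPartition) : ofFinsupp lam.toFinsupp = lam := by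
  obtain ⟨N₁, h₁⟩ := lam.exists_parts_eq_zero
  obtain ⟨N₂, h₂⟩ := (ofFinsupp lam.toFinsupp).exists_parts_eq_zero
  ext1
  refine Nat.eq_of_eq_add_succ (g := lam.toFinsupp) (Finsupp.tailSum_eq_add _)
    lam.parts_eq_toFinsupp_add (max N₁ N₂) fun i hi => ?_
  rw [h₂ i (le_of_max_le_right hi), h₁ i (le_of_max_le_left hi)]

theorem toFinsupp_ofFinsupp (f : ℕ →₀ ℕ) : (ofFinsupp f).toFinsupp = f := by
  ext k
  have := (ofFinsupp f).parts_eq_toFinsupp_add k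
  rw [show (ofFinsupp f).parts = f.tailSum from rfl, f.tailSum_eq_add k] at this
  omega

noncomputable def finsuppEquiv : CPartition ≃ (ℕ →₀ ℕ) where
  toFun := toFinsupp
  invFun := ofFinsupp
  left_inv := ofFinsupp_toFinsupp
  right_inv := toFinsupp_ofFinsupp

theorem tsum_parts_mul_eq_weight (lam : CPartition) (d : ℕ) (hd : 0 < d) :
    ∑' t, lam.parts (d * t) = Finsupp.weight (fun k => k / d + 1) lam.toFinsupp := by
  conv_lhs => rw [← lam.ofFinsupp_toFinsupp]
  exact lam.toFinsupp.tsum_tailSum_mul d hd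

theorem size_eq_weight (lam : CPartition) :
    lam.size = Finsupp.weight (· + 1) lam.toFinsupp := by
  simpa [size] using lam.tsum_parts_mul_eq_weight 1 one_pos

noncomputable def oddColsEquiv : CPartition ≃ CPartition × CPartition :=
  (Function.Involutive.toPerm transpose transpose_transpose).trans <|
    finsuppEquiv.trans <| Finsupp.evenOddEquiv.toEquiv.trans <|
      finsuppEquiv.symm.prodCongr finsuppEquiv.symm

theorem oddCols_eq_size_add_size (lam : CPartition) :
    lam.oddCols = (oddColsEquiv lam).1.size + (oddColsEquiv lam).2.size := by
  set g := Finsupp.evenOddEquiv lam.transpose.toFinsupp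
  have h₁ : (oddColsEquiv lam).1 = ofFinsupp g.1 := rfl
  have h₂ : (oddColsEquiv lam).2 = ofFinsupp g.2 := rfl
  rw [h₁, h₂, size_eq_weight, size_eq_weight, toFinsupp_ofFinsupp, toFinsupp_ofFinsupp,
    oddCols_eq_tsum_transpose_parts, tsum_parts_mul_eq_weight _ 2 two_pos,
    Finsupp.weight_eq_weight_evenOddEquiv]
  congr 3 <;> funext k <;> omega

theorem finite_setOf_size_le (n : ℕ) : {lam : CPartition | lam.size ≤ n}.Finite := by
  simp only [size_eq_weight]
  exact (Finsupp.finite_setOf_weight_add_one_le n).preimage finsuppEquiv.injective.injOn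

noncomputable def pairQuadEquiv :
    CPartition × CPartition ≃ CPartition × CPartition × CPartition × CPartition :=
  (oddColsEquiv.prodCongr oddColsEquiv).trans (Equiv.prodAssoc _ _ _)

theorem oddCols_add_oddCols_eq (p : CPartition × CPartition) :
    p.1.oddCols + p.2.oddCols = (pairQuadEquiv p).1.size + (pairQuadEquiv p).2.1.size +
      (pairQuadEquiv p).2.2.1.size + (pairQuadEquiv p).2.2.2.size := by
  rw [oddCols_eq_size_add_size p.1, oddCols_eq_size_add_size p.2, ← add_assoc]
  rfl

theorem finite_setOf_size_add_size_add_size_add_size_eq (n : ℕ) :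
    {t : CPartition × CPartition × CPartition × CPartition |
      t.1.size + t.2.1.size + t.2.2.1.size + t.2.2.2.size = n}.Finite := by
  have hS := finite_setOf_size_le n
  refine (hS.prod (hS.prod (hS.prod hS))).subset fun t ht => ?_
  simp only [Set.mem_ofPred_eq, Set.mem_prod] at ht ⊢
  omega

end CPartition

/-- For every `n`, the set of pairs `(λ, μ)` of partitions with
`o(λ) + o(μ) = n` is finite, and its cardinality equals `p₄(n)`, the number of
quadruples of partitions whose sizes sum to `n`. -/
theorem count_partition_pairs_by_oddCols (n : ℕ) :
    {p : CPartition × CPartition | p.1.oddCols + p.2.oddCols = n}.Finite ∧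
    {t : CPartition × CPartition × CPartition × CPartition |
        t.1.size + t.2.1.size + t.2.2.1.size + t.2.2.2.size = n}.Finite ∧
    Nat.card {p : CPartition × CPartition // p.1.oddCols + p.2.oddCols = n}
      = Nat.card {t : CPartition × CPartition × CPartition × CPartition //
          t.1.size + t.2.1.size + t.2.2.1.size + t.2.2.2.size = n} := by
  have he (p : CPartition × CPartition) : p.1.oddCols + p.2.oddCols = n ↔
      (CPartition.pairQuadEquiv p).1.size + (CPartition.pairQuadEquiv p).2.1.size +
        (CPartition.pairQuadEquiv p).2.2.1.size + (CPartition.pairQuadEquiv p).2.2.2.size = n := by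
    rw [CPartition.oddCols_add_oddCols_eq]
  have hquad := CPartition.finite_setOf_size_add_size_add_size_add_size_eq n
  refine ⟨?_, hquad, Nat.card_congr (CPartition.pairQuadEquiv.subtypeEquiv he)⟩
  exact (hquad.preimage CPartition.pairQuadEquiv.injective.injOn).subset fun p hp => (he p).mp hp
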